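/- arXiv:2506.01830 — 3 statements merged into one kernel-verified Lean document; each statement's English description precedes it below -/
import Mathlib

section
/- Let p be an odd prime and α a positive integer. Then σ(p^α) is a power of 2 (i.e., σ(p^α) = 2^m for some positive integer m) if and only if p is a Mersenne prime (p = 2^r - 1 for some r ≥ 2) and α = 1. -/
/-!
Write `σ(p^α) = 1 + p + ⋯ + p^α` and suppose it divides a power of two. An odd number of odd
terms is odd, hence `1`, so `α + 1` is even and the sum factors as
`(1 + p)(1 + p² + ⋯ + p^(α-1))`. The second factor has `(α + 1) / 2` odd terms: if that number
were even, the factor would in turn be divisible by `1 + p² ≡ 2 (mod 4)`, which is no power of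
two; so it is odd, the factor is `1`, and `α = 1`. Then `1 + p` is a power of two.
-/

open Finset

theorem geom_sum_mul_geom_sum_pow {R : Type*} [CommSemiring R] (x : R) (k s : ℕ) :
    (∑ i ∈ range k, x ^ i) * ∑ j ∈ range s, (x ^ k) ^ j = ∑ i ∈ range (k * s), x ^ i := by
  induction s with
  | zero => simp
  | succ s ih =>
    rw [sum_range_succ, mul_add, ih, Nat.mul_succ, sum_range_add, sum_mul]
    congr 1
    refine sum_congr rfl fun i _ => ?_
    rw [← pow_mul, ← pow_add, add_comm]

theorem geom_sum_two_mul {R : Type*} [CommSemiring R] (x : R) (s : ℕ) :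
    ∑ i ∈ range (2 * s), x ^ i = (x + 1) * ∑ j ∈ range s, (x ^ 2) ^ j := by
  rw [← geom_sum_mul_geom_sum_pow, geom_sum_two]

namespace Nat

theorem odd_geom_sum_iff {x : ℕ} (hx : Odd x) (n : ℕ) :
    Odd (∑ i ∈ range n, x ^ i) ↔ Odd n := by
  rw [odd_sum_iff_odd_card_odd, filter_true_of_mem fun i _ => hx.pow, card_range]

theorem le_geom_sum {x : ℕ} (hx : 0 < x) (n : ℕ) : n ≤ ∑ i ∈ range n, x ^ i := by
  simpa using card_nsmul_le_sum (range n) (x ^ ·) 1 fun i _ => Nat.one_le_pow i x hx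

theorem eq_one_of_odd_of_dvd_two_pow {d m : ℕ} (hd : Odd d) (h : d ∣ 2 ^ m) : d = 1 :=
  (hd.coprime_two_right.pow_right m).eq_one_of_dvd h

theorem not_one_add_sq_dvd_two_pow {x : ℕ} (hx : Odd x) (hx1 : 1 < x) (m : ℕ) :
    ¬ 1 + x ^ 2 ∣ 2 ^ m := by
  intro h
  obtain ⟨t, -, ht⟩ := (dvd_prime_pow prime_two).mp h
  have hmod : (1 + x ^ 2) % 4 = 2 := by
    obtain ⟨c, rfl⟩ := hx
    have : (2 * c + 1) ^ 2 = 4 * (c * c + c) + 1 := by ring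
    omega
  have hx2 : 4 < 1 + x ^ 2 := by nlinarith
  rcases t with _ | _ | t
  · omega
  · omega
  · rw [ht, pow_succ, pow_succ] at hmod
    omega

theorem le_one_of_geom_sum_dvd_two_pow {x n m : ℕ} (hx : Odd x) (hn : Odd n)
    (h : ∑ i ∈ range n, x ^ i ∣ 2 ^ m) : n ≤ 1 := by
  have hsum := eq_one_of_odd_of_dvd_two_pow ((odd_geom_sum_iff hx n).mpr hn) h
  exact hsum ▸ le_geom_sum hx.pos n

theorem le_two_of_geom_sum_dvd_two_pow {x n m : ℕ} (hx : Odd x) (hx1 : 1 < x)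
    (h : ∑ i ∈ range n, x ^ i ∣ 2 ^ m) : n ≤ 2 := by
  rcases Nat.even_or_odd n with ⟨s, rfl⟩ | hn
  · rw [← two_mul, geom_sum_two_mul] at h
    have hs : ∑ j ∈ range s, (x ^ 2) ^ j ∣ 2 ^ m := dvd_of_mul_left_dvd h
    rcases Nat.even_or_odd s with ⟨u, rfl⟩ | hs_odd
    · rw [← two_mul, geom_sum_two_mul, add_comm] at hs
      exact absurd (dvd_of_mul_right_dvd hs) (not_one_add_sq_dvd_two_pow hx hx1 m)
    · have := le_one_of_geom_sum_dvd_two_pow hx.pow hs_odd hs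
      omega
  · have := le_one_of_geom_sum_dvd_two_pow hx hn h
    omega

end Nat

theorem stmt0 (p α : ℕ) (hp : p.Prime) (hodd : Odd p) (hα : 0 < α) :
    (∃ m : ℕ, 0 < m ∧ ArithmeticFunction.sigma 1 (p ^ α) = 2 ^ m) ↔
      ((∃ r : ℕ, 2 ≤ r ∧ p = 2 ^ r - 1) ∧ α = 1) := by
  rw [ArithmeticFunction.sigma_one_apply_prime_pow hp]
  constructor
  · rintro ⟨m, -, hσ⟩
    have hα1 : α = 1 := by
      have := Nat.le_two_of_geom_sum_dvd_two_pow hodd hp.one_lt hσ.dvd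
      omega
    subst hα1
    rw [geom_sum_two] at hσ
    have hm : 2 ≤ m := by
      by_contra! hm
      interval_cases m <;> linarith [hp.two_le]
    exact ⟨⟨m, hm, by omega⟩, rfl⟩
  · rintro ⟨⟨r, hr, rfl⟩, rfl⟩
    refine ⟨r, by omega, ?_⟩
    have : 1 ≤ 2 ^ r := Nat.one_le_two_pow
    rw [geom_sum_two]
    omega
end

section
/- If Conjecture R holds for n (i.e., the sequence obtained by iterating 𝔑(n) = σ(n) if n odd, n/2 if n even, starting from n, eventually reaches 1) for all odd n, then there is no odd positive integer N with σ(N) = 2^k · N for any k ≥ 1. In particular, under this hypothesis there is no odd perfect number. -/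
/-
If `N` is odd and `σ N = 2^k N`, the iteration goes `N ↦ 2^k N ↦ 2^(k-1) N ↦ ⋯ ↦ N`, so the orbit
of `N` is a cycle inside `{2^j N}`; it never reaches `1` once `N ≥ 2`, contradicting Conjecture R.
-/

def R (n : ℕ) : ℕ := if Odd n then ArithmeticFunction.sigma 1 n else n / 2

open scoped ArithmeticFunction.sigma

lemma R_of_odd {n : ℕ} (hn : Odd n) : R n = σ 1 n := if_pos hn

lemma R_two_mul (n : ℕ) : R (2 * n) = n := by
  simp [R]

lemma mapsTo_R_range_two_pow_mul {N k : ℕ} (hN : Odd N) (hσ : σ 1 N = 2 ^ k * N) :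
    Set.MapsTo R (Set.range (2 ^ · * N)) (Set.range (2 ^ · * N)) := by
  rintro _ ⟨j, rfl⟩
  cases j with
  | zero => exact ⟨k, by simp only [pow_zero, one_mul, R_of_odd hN, hσ]⟩
  | succ j => exact ⟨j, by simp only [pow_succ', mul_assoc, R_two_mul]⟩

lemma exists_iterate_R_eq_two_pow_mul {N k : ℕ} (hN : Odd N) (hσ : σ 1 N = 2 ^ k * N) (m : ℕ) :
    ∃ j, R^[m] N = 2 ^ j * N := by
  obtain ⟨j, hj⟩ := (mapsTo_R_range_two_pow_mul hN hσ).iterate m (x := N) ⟨0, by simp⟩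
  exact ⟨j, hj.symm⟩

theorem stmt11
    (hconj : ∀ n : ℕ, 1 ≤ n → Odd n → ∃ k : ℕ, R^[k] n = 1) :
    ¬ ∃ (N k : ℕ), Odd N ∧ 2 ≤ N ∧ 1 ≤ k ∧ ArithmeticFunction.sigma 1 N = 2 ^ k * N := by
  rintro ⟨N, k, hN, hN2, -, hσ⟩
  obtain ⟨m, hm⟩ := hconj N (by omega) hN
  obtain ⟨j, hj⟩ := exists_iterate_R_eq_two_pow_mul hN hσ m
  have : N ≤ 2 ^ j * N := Nat.le_mul_of_pos_left N (Nat.two_pow_pos j)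
  omega
end

section
/- Let n = 2^19 · 3^7 · 5^3 · 7 · 11 · 13 · 31 · 41^2 · 431 · 1723. Then σ(17n)/(17n) = 96/17, i.e., 17 · σ(17n) = 96 · 17 · n. -/
open ArithmeticFunction ArithmeticFunction.sigma in
lemma sig_mul (a b : ℕ) (h : Nat.Coprime a b) :
    ArithmeticFunction.sigma 1 (a * b) = σ 1 a * σ 1 b :=
  ArithmeticFunction.isMultiplicative_sigma.map_mul_of_coprime h

open ArithmeticFunction ArithmeticFunction.sigma in
lemma sig_pp (p i : ℕ) (hp : p.Prime) :
    σ 1 (p ^ i) = ∑ k ∈ Finset.range (i + 1), p ^ k :=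
  ArithmeticFunction.sigma_one_apply_prime_pow hp

open ArithmeticFunction ArithmeticFunction.sigma in
lemma sig_p (p : ℕ) (hp : p.Prime) : σ 1 p = p + 1 := by
  rw [ArithmeticFunction.sigma_one_apply, hp.divisors, Finset.sum_insert (by simp [Ne.symm hp.ne_one]),
    Finset.sum_singleton]
  omega

theorem stmt14 :
    17 * ArithmeticFunction.sigma 1 (17 * (2^19 * 3^7 * 5^3 * 7 * 11 * 13 * 31 * 41^2 * 431 * 1723))
      = 96 * (17 * (2^19 * 3^7 * 5^3 * 7 * 11 * 13 * 31 * 41^2 * 431 * 1723)) := by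
  rw [sig_mul _ _ (by norm_num), sig_mul _ _ (by norm_num), sig_mul _ _ (by norm_num),
      sig_mul _ _ (by norm_num), sig_mul _ _ (by norm_num), sig_mul _ _ (by norm_num),
      sig_mul _ _ (by norm_num), sig_mul _ _ (by norm_num), sig_mul _ _ (by norm_num),
      sig_mul _ _ (by norm_num),
      sig_p 17 (by norm_num), sig_pp 2 19 (by norm_num), sig_pp 3 7 (by norm_num),
      sig_pp 5 3 (by norm_num), sig_p 7 (by norm_num), sig_p 11 (by norm_num),
      sig_p 13 (by norm_num), sig_p 31 (by norm_num), sig_pp 41 2 (by norm_num),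
      sig_p 431 (by norm_num), sig_p 1723 (by norm_num)]
  decide
end
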